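/- Let p ≥ 5 be prime, r ≥ 1, and suppose nonnegative integers e_i, a_i, f_i for 1 ≤ i ≤ p-1 satisfy: e_i = a_i + f_i, e_i + e_{p-i} is independent of i, f_i + f_{p-i} is independent of i, a_i = a_{p-i}, and e_i - e_{p-1} = r(p-i-1)/p for all i. Then a_i = a_j for all 1 ≤ i, j ≤ p-1, and f_i ≥ r(p-(i+1))/p > 0 for all (p+1)/2 ≤ i < p-1. -/

import Mathlib

/-!
Since `a i = a (p - i)`, each conjugate-pair sum splits as
`e i + e (p - i) = 2 * a i + (f i + f (p - i))`; both pair sums are constant, so `2 * a i` is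
constant and all `a i` agree. Then `f i - f (p - 1) = e i - e (p - 1) = r (p - i - 1) / p`, and
`f (p - 1) ≥ 0` gives the lower bound.
-/

section ConjugatePairs

variable (n : ℕ) (e a f : ℕ → ℕ)

lemma pairSum_eq_two_mul_add (hsum : ∀ i, 1 ≤ i → i ≤ n - 1 → e i = a i + f i)
    (hasym : ∀ i, 1 ≤ i → i ≤ n - 1 → a i = a (n - i)) {i : ℕ} (hi1 : 1 ≤ i) (hi2 : i ≤ n - 1) :
    e i + e (n - i) = 2 * a i + (f i + f (n - i)) := by
  rw [hsum i hi1 hi2, hsum (n - i) (by omega) (by omega), ← hasym i hi1 hi2]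
  ring

lemma eq_of_pairSum_const (hsum : ∀ i, 1 ≤ i → i ≤ n - 1 → e i = a i + f i)
    (heconst : ∀ i j, 1 ≤ i → i ≤ n - 1 → 1 ≤ j → j ≤ n - 1 →
      e i + e (n - i) = e j + e (n - j))
    (hfconst : ∀ i j, 1 ≤ i → i ≤ n - 1 → 1 ≤ j → j ≤ n - 1 →
      f i + f (n - i) = f j + f (n - j))
    (hasym : ∀ i, 1 ≤ i → i ≤ n - 1 → a i = a (n - i)) :
    ∀ i j, 1 ≤ i → i ≤ n - 1 → 1 ≤ j → j ≤ n - 1 → a i = a j := by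
  intro i j hi1 hi2 hj1 hj2
  have hi := pairSum_eq_two_mul_add n e a f hsum hasym hi1 hi2
  have hj := pairSum_eq_two_mul_add n e a f hsum hasym hj1 hj2
  have he := heconst i j hi1 hi2 hj1 hj2
  have hf := hfconst i j hi1 hi2 hj1 hj2
  omega

end ConjugatePairs

lemma sub_le_of_eq_add_of_eq_add {e e' a f f' : ℕ} (h : e = a + f) (h' : e' = a + f') :
    (e : ℚ) - e' ≤ f := by
  subst h h'
  push_cast
  linarith [(Nat.cast_nonneg f' : (0 : ℚ) ≤ f')]

lemma mul_sub_div_pos {p r i : ℕ} (hr : 1 ≤ r) (hi : i + 1 < p) :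
    0 < (r : ℚ) * ((p : ℚ) - ((i : ℚ) + 1)) / p := by
  have hiq : (i : ℚ) + 1 < p := by exact_mod_cast hi
  have hrq : (0 : ℚ) < r := by exact_mod_cast hr
  exact div_pos (mul_pos hrq (by linarith)) (by linarith)

theorem rank_neq_zero_general (p r : ℕ) (hr : 1 ≤ r)
    (e a f : ℕ → ℕ)
    (hsum : ∀ i, 1 ≤ i → i ≤ p - 1 → e i = a i + f i)
    (heconst : ∀ i j, 1 ≤ i → i ≤ p - 1 → 1 ≤ j → j ≤ p - 1 →
      e i + e (p - i) = e j + e (p - j))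
    (hfconst : ∀ i j, 1 ≤ i → i ≤ p - 1 → 1 ≤ j → j ≤ p - 1 →
      f i + f (p - i) = f j + f (p - j))
    (hasym : ∀ i, 1 ≤ i → i ≤ p - 1 → a i = a (p - i))
    (he : ∀ i, 1 ≤ i → i ≤ p - 1 →
      (e i : ℚ) - e (p - 1) = (r : ℚ) * ((p : ℚ) - i - 1) / p) :
    (∀ i j, 1 ≤ i → i ≤ p - 1 → 1 ≤ j → j ≤ p - 1 → a i = a j) ∧
    (∀ i, p + 1 ≤ 2 * i → i < p - 1 →
      (r : ℚ) * ((p : ℚ) - ((i : ℚ) + 1)) / p ≤ (f i : ℚ) ∧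
      0 < (r : ℚ) * ((p : ℚ) - ((i : ℚ) + 1)) / p) := by
  have ha := eq_of_pairSum_const p e a f hsum heconst hfconst hasym
  refine ⟨ha, fun i h2i hip => ⟨?_, mul_sub_div_pos hr (by omega)⟩⟩
  have hi1 : 1 ≤ i := by omega
  have hi2 : i ≤ p - 1 := by omega
  have hei : e i = a (p - 1) + f i := by
    rw [hsum i hi1 hi2, ha i (p - 1) hi1 hi2 (by omega) le_rfl]
  calc (r : ℚ) * ((p : ℚ) - ((i : ℚ) + 1)) / p = (e i : ℚ) - e (p - 1) := by
        rw [he i hi1 hi2, sub_add_eq_sub_sub]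
    _ ≤ f i := sub_le_of_eq_add_of_eq_add hei (hsum (p - 1) (by omega) le_rfl)

/-- Abstract numerical form of the lemma `rank neq0`: for a prime `p ≥ 5`,
`r ≥ 1`, and nonnegative integers `e i, a i, f i` (`1 ≤ i ≤ p-1`) with
`e i = a i + f i`, `e i + e (p-i)` independent of `i`, `f i + f (p-i)`
independent of `i`, `a i = a (p-i)`, and `e i - e (p-1) = r(p-i-1)/p`, all the
`a i` are equal, and `f i ≥ r(p-(i+1))/p > 0` for `(p+1)/2 ≤ i < p-1`. -/
theorem rank_neq_zero (p r : ℕ) (hp : p.Prime) (hp5 : 5 ≤ p) (hr : 1 ≤ r)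
    (e a f : ℕ → ℕ)
    (hsum : ∀ i, 1 ≤ i → i ≤ p - 1 → e i = a i + f i)
    (heconst : ∀ i j, 1 ≤ i → i ≤ p - 1 → 1 ≤ j → j ≤ p - 1 →
      e i + e (p - i) = e j + e (p - j))
    (hfconst : ∀ i j, 1 ≤ i → i ≤ p - 1 → 1 ≤ j → j ≤ p - 1 →
      f i + f (p - i) = f j + f (p - j))
    (hasym : ∀ i, 1 ≤ i → i ≤ p - 1 → a i = a (p - i))
    (he : ∀ i, 1 ≤ i → i ≤ p - 1 →
      (e i : ℚ) - e (p - 1) = (r : ℚ) * ((p : ℚ) - i - 1) / p) :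
    (∀ i j, 1 ≤ i → i ≤ p - 1 → 1 ≤ j → j ≤ p - 1 → a i = a j) ∧
    (∀ i, p + 1 ≤ 2 * i → i < p - 1 →
      (r : ℚ) * ((p : ℚ) - ((i : ℚ) + 1)) / p ≤ (f i : ℚ) ∧
      0 < (r : ℚ) * ((p : ℚ) - ((i : ℚ) + 1)) / p) :=
  rank_neq_zero_general p r hr e a f hsum heconst hfconst hasym he
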